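/- arXiv:2408.05338 — 4 statements merged into one kernel-verified Lean document; each statement's English description precedes it below -/
import Mathlib

section
/- Let (X, dist) be a finite metric space with basepoint w, and define dist_T on X by dist_T(x,y) = (x|x)_w + (y|y)_w − 2(x|y)'_w, where (x|y)'_w = sup over finite sequences y_1 = x, ..., y_ℓ = y in X of min_k (y_k|y_{k+1})_w. Then dist_T is a pseudo-metric on X, dist_T(x,w) = dist(x,w) for all x, and dist_T(x,y) ≤ dist(x,y) for all x, y ∈ X. -/
noncomputable section

/-- Gromov product of `x` and `y` at `w` with respect to the distance function `d`. -/
def gromovProd {X : Type*} (d : X → X → ℝ) (w x y : X) : ℝ :=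
  (d x w + d y w - d x y) / 2

/-- Bottleneck value: supremum over finite sequences from `x` to `y` of the minimum
of `c` over consecutive pairs. -/
def bottleneck {α : Type*} (c : α → α → ℝ) (x y : α) : ℝ :=
  sSup {r : ℝ | ∃ (ℓ : ℕ) (hℓ : 0 < ℓ) (f : ℕ → α), f 0 = x ∧ f ℓ = y ∧
    r = (Finset.range ℓ).inf' (Finset.nonempty_range_iff.mpr hℓ.ne')
      (fun k => c (f k) (f (k + 1)))}

/-- Gromov's approximating tree pseudo-metric. -/
def treeDist {X : Type*} (d : X → X → ℝ) (w : X) (x y : X) : ℝ :=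
  gromovProd d w x x + gromovProd d w y y - 2 * bottleneck (gromovProd d w) x y

namespace TreeDistAux

/-- The set whose supremum is the bottleneck. -/
def chainSet {α : Type*} (c : α → α → ℝ) (x y : α) : Set ℝ :=
  {r : ℝ | ∃ (ℓ : ℕ) (hℓ : 0 < ℓ) (f : ℕ → α), f 0 = x ∧ f ℓ = y ∧
    r = (Finset.range ℓ).inf' (Finset.nonempty_range_iff.mpr hℓ.ne')
      (fun k => c (f k) (f (k + 1)))}

lemma bottleneck_eq {α : Type*} (c : α → α → ℝ) (x y : α) :
    bottleneck c x y = sSup (chainSet c x y) := rfl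

lemma self_mem_chainSet {α : Type*} (c : α → α → ℝ) (x y : α) :
    c x y ∈ chainSet c x y := by
  refine ⟨1, one_pos, fun n => if n = 0 then x else y, by simp, by simp, ?_⟩
  simp [Finset.range_one]

lemma chainSet_nonempty {α : Type*} (c : α → α → ℝ) (x y : α) :
    (chainSet c x y).Nonempty := ⟨c x y, self_mem_chainSet c x y⟩

lemma chainSet_finite {α : Type*} [Fintype α] (c : α → α → ℝ) (x y : α) :
    (chainSet c x y).Finite := by
  apply Set.Finite.subset (Set.finite_range (fun p : α × α => c p.1 p.2))
  rintro r ⟨ℓ, hℓ, f, h0, h1, rfl⟩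
  obtain ⟨k, hk, hkeq⟩ := Finset.exists_mem_eq_inf'
    (Finset.nonempty_range_iff.mpr hℓ.ne') (fun k => c (f k) (f (k + 1)))
  exact ⟨(f k, f (k + 1)), hkeq.symm⟩

variable {X : Type*} [MetricSpace X]

lemma gp_self (w x : X) : gromovProd dist w x x = dist x w := by
  simp [gromovProd]

lemma gp_symm (w x y : X) : gromovProd dist w x y = gromovProd dist w y x := by
  unfold gromovProd; rw [dist_comm x y]; ring

lemma gp_le_left (w x y : X) : gromovProd dist w x y ≤ dist x w := by
  have h := dist_triangle y x w
  rw [dist_comm y x] at h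
  unfold gromovProd; linarith

lemma gp_le_right (w x y : X) : gromovProd dist w x y ≤ dist y w := by
  rw [gp_symm]; exact gp_le_left w y x

lemma chainSet_le_left (w : X) {x y : X} {r : ℝ}
    (hr : r ∈ chainSet (gromovProd dist w) x y) : r ≤ dist x w := by
  obtain ⟨ℓ, hℓ, f, h0, h1, rfl⟩ := hr
  calc (Finset.range ℓ).inf' (Finset.nonempty_range_iff.mpr hℓ.ne')
        (fun k => gromovProd dist w (f k) (f (k + 1)))
      ≤ gromovProd dist w (f 0) (f 1) :=
        Finset.inf'_le _ (Finset.mem_range.mpr hℓ)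
    _ ≤ dist (f 0) w := gp_le_left w (f 0) (f 1)
    _ = dist x w := by rw [h0]

lemma chainSet_le_right (w : X) {x y : X} {r : ℝ}
    (hr : r ∈ chainSet (gromovProd dist w) x y) : r ≤ dist y w := by
  obtain ⟨ℓ, hℓ, f, h0, h1, rfl⟩ := hr
  have hmem : ℓ - 1 ∈ Finset.range ℓ := Finset.mem_range.mpr (by omega)
  have hstep : ℓ - 1 + 1 = ℓ := by omega
  calc (Finset.range ℓ).inf' (Finset.nonempty_range_iff.mpr hℓ.ne')
        (fun k => gromovProd dist w (f k) (f (k + 1)))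
      ≤ gromovProd dist w (f (ℓ - 1)) (f (ℓ - 1 + 1)) := Finset.inf'_le _ hmem
    _ ≤ dist (f (ℓ - 1 + 1)) w := gp_le_right w _ _
    _ = dist y w := by rw [hstep, h1]

variable [Fintype X]

lemma bottleneck_mem (w : X) (x y : X) :
    bottleneck (gromovProd dist w) x y ∈ chainSet (gromovProd dist w) x y :=
  Set.Nonempty.csSup_mem (chainSet_nonempty _ x y) (chainSet_finite _ x y)

lemma gp_le_bottleneck (w : X) (x y : X) :
    gromovProd dist w x y ≤ bottleneck (gromovProd dist w) x y :=
  le_csSup (chainSet_finite _ x y).bddAbove (self_mem_chainSet _ x y)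

lemma bottleneck_le_left (w : X) (x y : X) :
    bottleneck (gromovProd dist w) x y ≤ dist x w :=
  chainSet_le_left w (bottleneck_mem w x y)

lemma bottleneck_le_right (w : X) (x y : X) :
    bottleneck (gromovProd dist w) x y ≤ dist y w :=
  chainSet_le_right w (bottleneck_mem w x y)

lemma bottleneck_symm_le (w : X) (x y : X) :
    bottleneck (gromovProd dist w) x y ≤ bottleneck (gromovProd dist w) y x := by
  apply csSup_le (chainSet_nonempty _ x y)
  rintro r ⟨ℓ, hℓ, f, h0, h1, rfl⟩
  have hne := Finset.nonempty_range_iff.mpr hℓ.ne'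
  set g : ℕ → X := fun k => f (ℓ - k) with hg
  have hmem : (Finset.range ℓ).inf' hne (fun k => gromovProd dist w (g k) (g (k + 1)))
      ∈ chainSet (gromovProd dist w) y x :=
    ⟨ℓ, hℓ, g, by simp [hg, h1], by simp [hg, h0], rfl⟩
  have hle : (Finset.range ℓ).inf' hne (fun k => gromovProd dist w (f k) (f (k + 1)))
      ≤ (Finset.range ℓ).inf' hne (fun k => gromovProd dist w (g k) (g (k + 1))) := by
    apply Finset.le_inf'
    intro k hk
    rw [Finset.mem_range] at hk
    have h1' : ℓ - (k + 1) + 1 = ℓ - k := by omega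
    have heq : gromovProd dist w (g k) (g (k + 1)) =
        gromovProd dist w (f (ℓ - (k + 1))) (f (ℓ - (k + 1) + 1)) := by
      rw [gp_symm]
      simp only [hg]
      rw [h1']
    rw [heq]
    exact Finset.inf'_le _ (Finset.mem_range.mpr (by omega))
  exact hle.trans (le_csSup (chainSet_finite _ y x).bddAbove hmem)

lemma bottleneck_symm (w : X) (x y : X) :
    bottleneck (gromovProd dist w) x y = bottleneck (gromovProd dist w) y x :=
  le_antisymm (bottleneck_symm_le w x y) (bottleneck_symm_le w y x)

lemma min_bottleneck_le (w : X) (x y z : X) :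
    min (bottleneck (gromovProd dist w) x y) (bottleneck (gromovProd dist w) y z) ≤
      bottleneck (gromovProd dist w) x z := by
  obtain ⟨ℓ, hℓ, f, hf0, hf1, hfr⟩ := bottleneck_mem w x y
  obtain ⟨m, hm, g, hg0, hg1, hgr⟩ := bottleneck_mem w y z
  set h : ℕ → X := fun k => if k < ℓ then f k else g (k - ℓ) with hh
  have hℓm : 0 < ℓ + m := by omega
  have hne : (Finset.range (ℓ + m)).Nonempty := Finset.nonempty_range_iff.mpr hℓm.ne'
  have hmem : (Finset.range (ℓ + m)).inf' hne
      (fun k => gromovProd dist w (h k) (h (k + 1))) ∈ chainSet (gromovProd dist w) x z := by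
    refine ⟨ℓ + m, hℓm, h, ?_, ?_, rfl⟩
    · simp only [hh, if_pos hℓ, hf0]
    · have hlt : ¬ (ℓ + m < ℓ) := by omega
      simp only [hh, if_neg hlt]
      rw [show ℓ + m - ℓ = m by omega, hg1]
  have hle : min (bottleneck (gromovProd dist w) x y) (bottleneck (gromovProd dist w) y z)
      ≤ (Finset.range (ℓ + m)).inf' hne (fun k => gromovProd dist w (h k) (h (k + 1))) := by
    apply Finset.le_inf'
    intro k hk
    rw [Finset.mem_range] at hk
    by_cases hkℓ : k < ℓ
    · have hk0 : h k = f k := by simp only [hh, if_pos hkℓ]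
      have hk1 : h (k + 1) = f (k + 1) := by
        by_cases h2 : k + 1 < ℓ
        · simp only [hh, if_pos h2]
        · have hkk : k + 1 = ℓ := by omega
          simp only [hh, if_neg h2]
          rw [show k + 1 - ℓ = 0 by omega, hg0, hkk, hf1]
      rw [hk0, hk1]
      calc min (bottleneck (gromovProd dist w) x y) (bottleneck (gromovProd dist w) y z)
          ≤ bottleneck (gromovProd dist w) x y := min_le_left _ _
        _ = _ := hfr
        _ ≤ gromovProd dist w (f k) (f (k + 1)) :=
            Finset.inf'_le _ (Finset.mem_range.mpr hkℓ)
    · have hk0 : h k = g (k - ℓ) := by simp only [hh, if_neg hkℓ]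
      have hk1 : h (k + 1) = g (k - ℓ + 1) := by
        have h2 : ¬ (k + 1 < ℓ) := by omega
        simp only [hh, if_neg h2]
        congr 1
        omega
      rw [hk0, hk1]
      calc min (bottleneck (gromovProd dist w) x y) (bottleneck (gromovProd dist w) y z)
          ≤ bottleneck (gromovProd dist w) y z := min_le_right _ _
        _ = _ := hgr
        _ ≤ gromovProd dist w (g (k - ℓ)) (g (k - ℓ + 1)) :=
            Finset.inf'_le _ (Finset.mem_range.mpr (by omega))
  exact hle.trans (le_csSup (chainSet_finite _ x z).bddAbove hmem)

end TreeDistAux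

open TreeDistAux in
theorem treeDist_pseudoMetric {X : Type*} [MetricSpace X] [Fintype X] (w : X) :
    (∀ x, treeDist dist w x x = 0) ∧
    (∀ x y, treeDist dist w x y = treeDist dist w y x) ∧
    (∀ x y, 0 ≤ treeDist dist w x y) ∧
    (∀ x y z, treeDist dist w x z ≤ treeDist dist w x y + treeDist dist w y z) ∧
    (∀ x, treeDist dist w x w = dist x w) ∧
    (∀ x y, treeDist dist w x y ≤ dist x y) := by
  refine ⟨?_, ?_, ?_, ?_, ?_, ?_⟩
  · intro x
    have h1 := gp_le_bottleneck w x x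
    have h2 := bottleneck_le_left w x x
    rw [gp_self] at h1
    simp only [treeDist, gp_self]
    linarith
  · intro x y
    simp only [treeDist, bottleneck_symm w x y]
    ring
  · intro x y
    have h1 := bottleneck_le_left w x y
    have h2 := bottleneck_le_right w x y
    simp only [treeDist, gp_self]
    rcases le_total (dist x w) (dist y w) with h | h <;> linarith
  · intro x y z
    have h1 := bottleneck_le_right w x y
    have h2 := bottleneck_le_left w y z
    have h3 := min_bottleneck_le w x y z
    simp only [treeDist, gp_self]
    rcases le_total (bottleneck (gromovProd dist w) x y)
        (bottleneck (gromovProd dist w) y z) with h | h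
    · rw [min_eq_left h] at h3; linarith
    · rw [min_eq_right h] at h3; linarith
  · intro x
    have h1 := gp_le_bottleneck w x w
    have h2 := bottleneck_le_right w x w
    have hgp : gromovProd dist w x w = 0 := by simp [gromovProd]
    rw [hgp] at h1
    rw [dist_self] at h2
    simp only [treeDist, gp_self, dist_self]
    linarith
  · intro x y
    have h1 := gp_le_bottleneck w x y
    simp only [treeDist, gp_self]
    have hgp : gromovProd dist w x y = (dist x w + dist y w - dist x y) / 2 := rfl
    rw [hgp] at h1
    linarith
end
end

section
/- Let (X, dist) be a finite metric space with basepoint w, and let dist_T be the Gromov approximating tree pseudo-metric defined by (x|y)'_w = sup over finite sequences from x to y of the minimum of consecutive Gromov products at w. Then (X, dist_T) is 0-hyperbolic. -/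
noncomputable section

/-!
Write `T x y = |x| + |y| - 2 * B x y`, where `|x| = (x|x)_w` and `B` is the bottleneck of the
Gromov product. The Gromov product of `T` at `v` is `|v| - B x v - B z v + B x z`, so
0-hyperbolicity of `T` is the four-point condition
`B x z + B y v ≥ min (B x y + B z v) (B y z + B x v)`, which holds for any symmetric `B` with
`B x z ≥ min (B x y) (B y z)`. The bottleneck has this property because `t < B x y` exactly when
`x` and `y` are joined by a chain all of whose steps have Gromov product `> t`, and such chains
can be concatenated and reversed.
-/

open Relation Function

theorem Relation.transGen_iff_exists_path {α : Type*} {r : α → α → Prop} {x y : α} :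
    TransGen r x y ↔
      ∃ ℓ, 0 < ℓ ∧ ∃ f : ℕ → α, f 0 = x ∧ f ℓ = y ∧ ∀ k < ℓ, r (f k) (f (k + 1)) := by
  constructor
  · intro h
    induction h with
    | @single b hxb =>
      exact ⟨1, one_pos, fun k => if k = 0 then x else b, rfl, rfl, fun k hk => by
        obtain rfl : k = 0 := by omega
        exact hxb⟩
    | @tail b c _ hbc ih =>
      obtain ⟨ℓ, hℓ, f, hf0, hfℓ, hf⟩ := ih
      refine ⟨ℓ + 1, ℓ.succ_pos, fun k => if k ≤ ℓ then f k else c, by simpa using hf0,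
        by simp, fun k hk => ?_⟩
      rcases Nat.lt_succ_iff_lt_or_eq.1 hk with hk | rfl
      · simpa [hk.le, Nat.succ_le_of_lt hk] using hf k hk
      · simpa [hfℓ] using hbc
  · rintro ⟨ℓ, hℓ, f, rfl, rfl, hf⟩
    obtain ⟨m, rfl⟩ := Nat.exists_eq_add_one_of_ne_zero hℓ.ne'
    induction m with
    | zero => exact .single (hf 0 hℓ)
    | succ m ih =>
      exact .tail (ih (by omega) fun k hk => hf k (by omega)) (hf (m + 1) (by omega))

section Bottleneck

variable {α : Type*} {c : α → α → ℝ}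

theorem lt_bottleneck_iff (hc : BddAbove (Set.range (uncurry c))) {t : ℝ} {x y : α} :
    t < bottleneck c x y ↔ TransGen (fun a b => t < c a b) x y := by
  rw [transGen_iff_exists_path, bottleneck]
  constructor
  · intro ht
    obtain ⟨_, ⟨ℓ, hℓ, f, hf0, hfℓ, rfl⟩, htr⟩ := exists_lt_of_lt_csSup
      (by exact ⟨c x y, 1, one_pos, fun k => if k = 0 then x else y, rfl, rfl, by simp⟩) ht
    exact ⟨ℓ, hℓ, f, hf0, hfℓ, fun k hk => (Finset.lt_inf'_iff _).1 htr k (Finset.mem_range.2 hk)⟩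
  · rintro ⟨ℓ, hℓ, f, hf0, hfℓ, hf⟩
    obtain ⟨M, hM⟩ := hc
    refine ((Finset.lt_inf'_iff _).2 fun k hk => hf k (Finset.mem_range.1 hk)).trans_le
      (le_csSup ⟨M, ?_⟩ ⟨ℓ, hℓ, f, hf0, hfℓ, rfl⟩)
    rintro _ ⟨ℓ, hℓ, f, -, -, rfl⟩
    exact Finset.inf'_le_of_le _ (Finset.mem_range.2 hℓ) (hM ⟨(f 0, f 1), rfl⟩)

theorem min_bottleneck_le (hc : BddAbove (Set.range (uncurry c))) (x y z : α) :
    min (bottleneck c x y) (bottleneck c y z) ≤ bottleneck c x z :=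
  le_of_forall_lt fun _ ht => by
    rw [lt_min_iff, lt_bottleneck_iff hc, lt_bottleneck_iff hc] at ht
    exact (lt_bottleneck_iff hc).2 (ht.1.trans ht.2)

theorem bottleneck_comm (hc : BddAbove (Set.range (uncurry c))) (hc_comm : ∀ a b, c a b = c b a)
    (x y : α) : bottleneck c x y = bottleneck c y x := by
  have key (x y : α) : bottleneck c x y ≤ bottleneck c y x :=
    le_of_forall_lt fun t ht => by
      have hswap : swap (fun a b => t < c a b) = fun a b => t < c a b :=
        funext₂ fun a b => by rw [swap, hc_comm]
      rw [lt_bottleneck_iff hc] at ht ⊢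
      rwa [← transGen_swap, hswap]
  exact (key x y).antisymm (key y x)

end Bottleneck

theorem gromovProd_comm {X : Type*} {d : X → X → ℝ} (hd : ∀ x y, d x y = d y x) (w x y : X) :
    gromovProd d w x y = gromovProd d w y x := by
  simp only [gromovProd, hd x y, add_comm (d x w)]

theorem add_ge_min_add_of_min_le {α : Type*} {b : α → α → ℝ} (hb_comm : ∀ x y, b x y = b y x)
    (hb : ∀ x y z, min (b x y) (b y z) ≤ b x z) (x y z v : α) :
    min (b x y + b z v) (b y z + b x v) ≤ b x z + b y v := by
  have h₁ := hb x y z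
  have h₂ := hb x v z
  have h₃ := hb y x v
  have h₄ := hb y z v
  rw [hb_comm v z] at h₂
  rw [hb_comm y x] at h₃
  by_contra! h
  rw [lt_min_iff] at h
  simp only [min_le_iff] at h₁ h₂ h₃ h₄
  rcases h₁ with h₁ | h₁ <;> rcases h₂ with h₂ | h₂ <;> rcases h₃ with h₃ | h₃ <;>
    rcases h₄ with h₄ | h₄ <;> linarith

theorem min_gromovProd_le_of_min_le {α : Type*} (q : α → ℝ) {b : α → α → ℝ}
    (hb_comm : ∀ x y, b x y = b y x) (hb : ∀ x y z, min (b x y) (b y z) ≤ b x z) (x y z v : α) :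
    min (gromovProd (fun x y => q x + q y - 2 * b x y) v x y)
      (gromovProd (fun x y => q x + q y - 2 * b x y) v y z) ≤
      gromovProd (fun x y => q x + q y - 2 * b x y) v x z := by
  have := add_ge_min_add_of_min_le hb_comm hb x y z v
  simp only [gromovProd, min_le_iff] at this ⊢
  rcases this with h | h
  · left; linarith [hb_comm y v]
  · right; linarith [hb_comm y v]

theorem treeDist_zero_hyperbolic {X : Type*} [MetricSpace X] [Fintype X] (w : X) :
    ∀ x y z v : X, gromovProd (treeDist dist w) v x z ≥
      min (gromovProd (treeDist dist w) v x y) (gromovProd (treeDist dist w) v y z) := by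
  have hc : BddAbove (Set.range (uncurry (gromovProd dist w))) := (Set.finite_range _).bddAbove
  have hc_comm := gromovProd_comm (d := (dist : X → X → ℝ)) dist_comm w
  exact min_gromovProd_le_of_min_le _ (bottleneck_comm hc hc_comm) (min_bottleneck_le hc)
end
end

section
/- Let (X, dist) be a finite metric space with basepoint w and let dist_T be its Gromov approximating tree pseudo-metric with respect to w. If dist_S is any 0-hyperbolic pseudo-metric on X with dist_S(w, x) = dist(w, x) for all x and dist_S(x, y) ≤ dist(x, y) for all x, y, then dist_S(x, y) ≤ dist_T(x, y) for all x, y ∈ X. That is, dist_T is the largest 0-hyperbolic pseudo-metric on X not increasing distances and preserving distances to w. -/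
noncomputable section

/-- Chain lemma: 0-hyperbolicity iterated over a chain. -/
lemma chain_lemma {X : Type*} (dS : X → X → ℝ) (w : X)
    (hShyp : ∀ x y z v : X, gromovProd dS v x z ≥
        min (gromovProd dS v x y) (gromovProd dS v y z)) :
    ∀ (ℓ : ℕ) (hℓ : 0 < ℓ) (f : ℕ → X),
      (Finset.range ℓ).inf' (Finset.nonempty_range_iff.mpr hℓ.ne')
        (fun k => gromovProd dS w (f k) (f (k + 1))) ≤ gromovProd dS w (f 0) (f ℓ) := by
  intro ℓ
  induction ℓ with
  | zero => intro h; exact absurd h (lt_irrefl 0)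
  | succ n ih =>
    intro _ f
    rcases Nat.eq_zero_or_pos n with hn | hn
    · subst hn
      simp
    · have h1 : (Finset.range (n+1)).inf' (Finset.nonempty_range_iff.mpr (Nat.succ_ne_zero n))
          (fun k => gromovProd dS w (f k) (f (k + 1))) ≤
          (Finset.range n).inf' (Finset.nonempty_range_iff.mpr hn.ne')
          (fun k => gromovProd dS w (f k) (f (k + 1))) := by
        apply Finset.le_inf'
        intro b hb
        apply Finset.inf'_le
        simp only [Finset.mem_range] at hb ⊢
        omega
      have h2 : (Finset.range (n+1)).inf' (Finset.nonempty_range_iff.mpr (Nat.succ_ne_zero n))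
          (fun k => gromovProd dS w (f k) (f (k + 1))) ≤
          gromovProd dS w (f n) (f (n + 1)) := by
        apply Finset.inf'_le
        simp
      calc ((Finset.range (n+1)).inf' (Finset.nonempty_range_iff.mpr (Nat.succ_ne_zero n))
          (fun k => gromovProd dS w (f k) (f (k + 1))))
          ≤ min (gromovProd dS w (f 0) (f n)) (gromovProd dS w (f n) (f (n+1))) :=
            le_min (le_trans h1 (ih hn f)) h2
        _ ≤ gromovProd dS w (f 0) (f (n+1)) := hShyp (f 0) (f n) (f (n+1)) w

theorem treeDist_optimal {X : Type*} [MetricSpace X] [Fintype X] (w : X)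
    (dS : X → X → ℝ)
    (hS0 : ∀ x, dS x x = 0)
    (hSsymm : ∀ x y, dS x y = dS y x)
    (hStri : ∀ x y z, dS x z ≤ dS x y + dS y z)
    (hShyp : ∀ x y z v : X, gromovProd dS v x z ≥
        min (gromovProd dS v x y) (gromovProd dS v y z))
    (hSw : ∀ x, dS w x = dist w x)
    (hSle : ∀ x y, dS x y ≤ dist x y) :
    ∀ x y, dS x y ≤ treeDist dist w x y := by
  intro x y
  have hdw : ∀ a : X, dS a w = dist a w := by
    intro a; rw [hSsymm, hSw, dist_comm]
  -- Monotonicity of Gromov product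
  have hmono : ∀ a b : X, gromovProd dist w a b ≤ gromovProd dS w a b := by
    intro a b
    unfold gromovProd
    have := hSle a b
    have h1 := hdw a
    have h2 := hdw b
    linarith
  -- Nonnegativity of dS Gromov product
  have hnn : 0 ≤ gromovProd dS w x y := by
    unfold gromovProd
    have := hStri x w y
    have := hSsymm w y
    linarith
  -- bottleneck ≤ gromovProd dS w x y
  have hb : bottleneck (gromovProd dist w) x y ≤ gromovProd dS w x y := by
    apply Real.sSup_le _ hnn
    rintro r ⟨ℓ, hℓ, f, hf0, hfℓ, rfl⟩
    have h1 : (Finset.range ℓ).inf' (Finset.nonempty_range_iff.mpr hℓ.ne')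
        (fun k => gromovProd dist w (f k) (f (k + 1))) ≤
        (Finset.range ℓ).inf' (Finset.nonempty_range_iff.mpr hℓ.ne')
        (fun k => gromovProd dS w (f k) (f (k + 1))) := by
      apply Finset.le_inf'
      intro b hb
      exact le_trans (Finset.inf'_le _ hb) (hmono _ _)
    have h2 := chain_lemma dS w hShyp ℓ hℓ f
    rw [hf0, hfℓ] at h2
    exact le_trans h1 h2
  unfold treeDist gromovProd
  simp only [dist_self]
  have h1 := hdw x
  have h2 := hdw y
  unfold gromovProd at hb
  linarith
end
end

section
/- Let Γ be a connected graph with vertex set X = {x_1, ..., x_n}, basepoint w = x_n, and edge-path metric dist. For each pair i ≠ j, the supremum over all finite sequences (y_1 = x_i, ..., y_s = x_j) of vertices of min_k (y_k|y_{k+1})_w equals the supremum over all edge-paths (z_1 = x_i, ..., z_t = x_j) in Γ (consecutive vertices adjacent) of min_k (z_k|z_{k+1})_w. -/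
noncomputable section

/-- Bottleneck value restricted to edge-paths of the graph G. -/
def pathBottleneck {V : Type*} (G : SimpleGraph V) (c : V → V → ℝ) (x y : V) : ℝ :=
  sSup {r : ℝ | ∃ (ℓ : ℕ) (hℓ : 0 < ℓ) (f : ℕ → V), f 0 = x ∧ f ℓ = y ∧
    (∀ k < ℓ, G.Adj (f k) (f (k + 1))) ∧
    r = (Finset.range ℓ).inf' (Finset.nonempty_range_iff.mpr hℓ.ne')
      (fun k => c (f k) (f (k + 1)))}

/-!
Every step `(u, v)` of a sequence can be replaced by a geodesic edge-path from `u` to `v`.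
If an edge `(a, b)` lies on such a geodesic, then `d(u,v) = d(u,a) + 1 + d(b,v)`, and the
triangle inequalities `d(u,w) ≤ d(u,a) + d(a,w)`, `d(v,w) ≤ d(v,b) + d(b,w)` give
`(u|v)_w ≤ (a|b)_w`. Concatenating these geodesics turns any sequence from `x` to `y` into an
edge-path whose bottleneck value is at least as large; conversely every edge-path is a sequence.
-/

lemma gromovProd_le_gromovProd_of_between {X : Type*} {d : X → X → ℝ} {w u v a b : X}
    (hu : d u w ≤ d u a + d a w) (hv : d v w ≤ d b v + d b w)
    (huv : d u a + d a b + d b v ≤ d u v) :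
    gromovProd d w u v ≤ gromovProd d w a b := by
  unfold gromovProd
  linarith

namespace SimpleGraph

variable {V : Type*} {G : SimpleGraph V}

lemma Walk.dist_add_dist_lt_length_of_mem_darts (hc : G.Connected) :
    ∀ {u v : V} (p : G.Walk u v) {e : G.Dart}, e ∈ p.darts →
      G.dist u e.fst + G.dist e.snd v < p.length
  | _, _, .nil, _, he => by simp at he
  | u, v, .cons h q, e, he => by
    rw [Walk.darts_cons, List.mem_cons] at he
    rcases he with rfl | he
    · simpa using G.dist_le q
    · have hstep : G.dist u e.fst ≤ 1 + G.dist _ e.fst :=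
        hc.dist_triangle.trans (by rw [dist_eq_one_iff_adj.mpr h])
      have := q.dist_add_dist_lt_length_of_mem_darts hc he
      simp only [Walk.length_cons]
      omega

lemma gromovProd_dist_le_of_length_eq_dist_of_mem_darts (hc : G.Connected) (w : V) {u v : V}
    (p : G.Walk u v) (hp : p.length = G.dist u v) {e : G.Dart} (he : e ∈ p.darts) :
    gromovProd (fun a b => (G.dist a b : ℝ)) w u v ≤
      gromovProd (fun a b => (G.dist a b : ℝ)) w e.fst e.snd := by
  have hlt := p.dist_add_dist_lt_length_of_mem_darts hc he
  have hedge : G.dist e.fst e.snd = 1 := dist_eq_one_iff_adj.mpr e.adj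
  apply gromovProd_le_gromovProd_of_between
  · exact_mod_cast hc.dist_triangle
  · rw [dist_comm (u := e.snd)]
    exact_mod_cast hc.dist_triangle
  · have : G.dist u e.fst + G.dist e.fst e.snd + G.dist e.snd v ≤ G.dist u v := by omega
    exact_mod_cast this

lemma exists_walk_forall_mem_darts_exists_le {c : V → V → ℝ}
    (hwalk : ∀ u v, ∃ p : G.Walk u v, ∀ e ∈ p.darts, c u v ≤ c e.fst e.snd)
    (f : ℕ → V) : ∀ ℓ : ℕ, ∃ p : G.Walk (f 0) (f ℓ),
      ∀ e ∈ p.darts, ∃ k < ℓ, c (f k) (f (k + 1)) ≤ c e.fst e.snd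
  | 0 => ⟨.nil, by simp⟩
  | ℓ + 1 => by
    obtain ⟨p, hp⟩ := exists_walk_forall_mem_darts_exists_le hwalk f ℓ
    obtain ⟨q, hq⟩ := hwalk (f ℓ) (f (ℓ + 1))
    refine ⟨p.append q, fun e he => ?_⟩
    rw [Walk.darts_append, List.mem_append] at he
    rcases he with he | he
    · obtain ⟨k, hk, hle⟩ := hp e he
      exact ⟨k, by omega, hle⟩
    · exact ⟨ℓ, by omega, hq e he⟩

theorem bottleneck_eq_pathBottleneck_of_forall_exists_walk {c : V → V → ℝ}
    (hwalk : ∀ u v, ∃ p : G.Walk u v, ∀ e ∈ p.darts, c u v ≤ c e.fst e.snd)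
    {x y : V} (hxy : x ≠ y) :
    bottleneck c x y = pathBottleneck G c x y := by
  refine csSup_eq_csSup_of_forall_exists_le ?_ ?_
  · rintro _ ⟨ℓ, hℓ, f, rfl, rfl, rfl⟩
    obtain ⟨p, hp⟩ := exists_walk_forall_mem_darts_exists_le hwalk f ℓ
    have hlen : 0 < p.length := Nat.pos_of_ne_zero fun h => hxy (p.eq_of_length_eq_zero h)
    refine ⟨_, ⟨p.length, hlen, p.getVert, p.getVert_zero, p.getVert_length,
      fun k hk => p.adj_getVert_succ hk, rfl⟩, Finset.le_inf' _ _ fun i hi => ?_⟩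
    have hi : i < p.darts.length := by simpa using hi
    obtain ⟨k, hk, hle⟩ := hp _ (List.getElem_mem hi)
    rw [Walk.darts_getElem_eq_getVert i hi] at hle
    exact (Finset.inf'_le _ (Finset.mem_range.mpr hk)).trans hle
  · rintro _ ⟨ℓ, hℓ, f, hf0, hfℓ, -, rfl⟩
    exact ⟨_, ⟨ℓ, hℓ, f, hf0, hfℓ, rfl⟩, le_rfl⟩

end SimpleGraph

theorem bottleneck_eq_pathBottleneck_general {V : Type*} (G : SimpleGraph V)
    (hc : G.Connected) (w x y : V) (hxy : x ≠ y) :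
    bottleneck (gromovProd (fun a b => (G.dist a b : ℝ)) w) x y =
      pathBottleneck G (gromovProd (fun a b => (G.dist a b : ℝ)) w) x y := by
  refine SimpleGraph.bottleneck_eq_pathBottleneck_of_forall_exists_walk (fun u v => ?_) hxy
  obtain ⟨p, hp⟩ := hc.exists_walk_length_eq_dist u v
  exact ⟨p, fun e he =>
    SimpleGraph.gromovProd_dist_le_of_length_eq_dist_of_mem_darts hc w p hp he⟩

theorem bottleneck_eq_pathBottleneck {V : Type*} [Fintype V] (G : SimpleGraph V)
    (hc : G.Connected) (w x y : V) (hxy : x ≠ y) :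
    bottleneck (gromovProd (fun a b => (G.dist a b : ℝ)) w) x y =
      pathBottleneck G (gromovProd (fun a b => (G.dist a b : ℝ)) w) x y :=
  bottleneck_eq_pathBottleneck_general G hc w x y hxy
end
end
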